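/- arXiv:1605.05807 — 2 statements merged into one kernel-verified Lean document; each statement's English description precedes it below -/
import Mathlib

section
/- Let T = ⟨P, 𝒢, O⟩ be a plan-recognition theory with O pairwise distinct, P' the transformed domain with c(o_a) = c(a), and G ∈ 𝒢. Then π is an optimal plan for G in P that satisfies the observation sequence O if and only if the corresponding sequence π' (obtained by replacing a_{f(j)} with o_{a_{f(j)}} as in the transformation) is simultaneously an optimal plan for the goal G in P' and an optimal plan for the goal G' = G ∪ F_o in P'. -/
/-!
Forgetting the marks (`o_a ↦ a`, dropping the fluents `p_a`) turns executions in `P'` into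
executions in `P` of the same cost, and `P` embeds into `P'` unchanged; so a plan for `G` in `P'`
is never cheaper than the cheapest plan for `G` in `P`, and the latter is attained in `P'`.
Conversely, if `π` satisfies `O` via a strictly monotone `f`, then along the marked sequence `π'`
the fluents `p_a` record exactly the new actions performed so far; since `f` is monotone each
`o_{O[j]}` finds `p_{O[j-1]}` already true, so `π'` executes in `P'` and reaches `G ∪ F_o`.
Optimality therefore transfers in both directions.
-/

/-- A STRIPS planning domain: fluents `F`, actions `A`, an initial state `I`,
and precondition/add/delete lists for each action.  A planning problem is
obtained by pairing a domain with a goal `G : Set F`. -/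
structure Strips (F A : Type) where
  I : Set F
  pre : A → Set F
  add : A → Set F
  del : A → Set F

namespace Strips

variable {F A : Type}

/-- The result of applying action `a` in state `s`: `(s \ Del(a)) ∪ Add(a)`. -/
def applyA (P : Strips F A) (s : Set F) (a : A) : Set F := (s \ P.del a) ∪ P.add a

/-- `Exec P s π t`: the action sequence `π` is applicable successively from
state `s` (each action's precondition holds when it is applied) and leads to
the state `t`. -/
inductive Exec (P : Strips F A) : Set F → List A → Set F → Prop
  | nil (s : Set F) : Exec P s [] s
  | cons {s t : Set F} {a : A} {π : List A} :
      P.pre a ⊆ s → Exec P (P.applyA s a) π t → Exec P s (a :: π) t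

/-- `π` is a plan for the goal `G` in the domain `P`: it is applicable
successively from the initial state and its final state contains `G`. -/
def IsPlan (P : Strips F A) (G : Set F) (π : List A) : Prop :=
  ∃ t, Exec P P.I π t ∧ G ⊆ t

/-- The cost of a plan: the sum of the costs of its actions. -/
def planCost (c : A → ℝ) (π : List A) : ℝ := (π.map c).sum

/-- An optimal plan for `G`: a plan for `G` of minimum cost among all plans for `G`. -/
def IsOptimalPlan (P : Strips F A) (c : A → ℝ) (G : Set F) (π : List A) : Prop :=
  P.IsPlan G π ∧ ∀ π', P.IsPlan G π' → planCost c π ≤ planCost c π'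

/-- `c*_P(G)`: the optimal (minimum) cost of achieving `G` in `P`. -/
noncomputable def cstar (P : Strips F A) (c : A → ℝ) (G : Set F) : ℝ :=
  sInf (planCost c '' {π | P.IsPlan G π})

/-- An action sequence `π` satisfies the observation sequence `O` iff there is a
strictly monotonic function `f` from observation indices into action indices
such that the `f j`-th action of `π` equals the `j`-th observation. -/
def Satisfies (π O : List A) : Prop :=
  ∃ f : Fin O.length → Fin π.length, StrictMono f ∧ ∀ j, π.get (f j) = O.get j

end Strips

/-- The transformed domain `P'` of a plan-recognition theory `⟨P, 𝒢, O⟩`: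
fluents `F' = F ⊕ Fin m` (the fluent `Sum.inr j` is `p_{o_j}`), actions
`A' = A ⊕ Fin m` (the action `Sum.inr j` is the new action `o_{o_j}`),
initial state `I' = I`.  The new action `o_{o_j}` has the same precondition,
add and delete lists as the observed action `o_j = O.get j`, except that
`p_{o_j}` is added to its add list and `p_{o_{j-1}}` (for the observation
immediately preceding `o_j` in `O`, if any, i.e. when `j > 0`) is added to its
precondition. -/
def Strips.transform (P : Strips F A) (O : List A) :
    Strips (F ⊕ Fin O.length) (A ⊕ Fin O.length) where
  I := Sum.inl '' P.I
  pre := fun x => match x with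
    | Sum.inl a => Sum.inl '' P.pre a
    | Sum.inr j => Sum.inl '' P.pre (O.get j) ∪
        {p | ∃ _ : 0 < (j : ℕ), p = Sum.inr
          (⟨(j : ℕ) - 1, Nat.lt_of_le_of_lt (Nat.sub_le _ _) j.isLt⟩ : Fin O.length)}
  add := fun x => match x with
    | Sum.inl a => Sum.inl '' P.add a
    | Sum.inr j => insert (Sum.inr j) (Sum.inl '' P.add (O.get j))
  del := fun x => match x with
    | Sum.inl a => Sum.inl '' P.del a
    | Sum.inr j => Sum.inl '' P.del (O.get j)

/-- The set `F_o` of new fluents `p_a`, `a ∈ O`, of the transformed domain. -/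
def obsFluents {F : Type} (O : List A) : Set (F ⊕ Fin O.length) := Set.range Sum.inr

/-- The transformed goal `G' = G ∪ F_o`. -/
def goalTransform {F : Type} (O : List A) (G : Set F) : Set (F ⊕ Fin O.length) :=
  Sum.inl '' G ∪ Set.range Sum.inr

/-- The cost function of the transformed domain: `c(o_a) = c(a)`. -/
def costTransform (c : A → ℝ) (O : List A) : A ⊕ Fin O.length → ℝ :=
  Sum.elim c (fun j => c (O.get j))

namespace Strips

variable {F A : Type}

theorem IsPlan.mono {P : Strips F A} {G H : Set F} {π : List A} (hGH : G ⊆ H)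
    (h : P.IsPlan H π) : P.IsPlan G π :=
  let ⟨t, hexec, hHt⟩ := h
  ⟨t, hexec, hGH.trans hHt⟩

theorem planCost_map {B : Type} (c : A → ℝ) (g : B → A) (ρ : List B) :
    planCost (c ∘ g) ρ = planCost c (ρ.map g) := by
  simp [planCost, List.map_map]

end Strips

def baseAction {A : Type} (O : List A) : A ⊕ Fin O.length → A := Sum.elim id O.get

theorem costTransform_eq_comp {A : Type} (c : A → ℝ) (O : List A) :
    costTransform c O = c ∘ baseAction O := by
  ext x
  cases x <;> rfl

namespace Strips

variable {F A : Type} (P : Strips F A) (O : List A)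

theorem preimage_inl_transform_applyA (s : Set (F ⊕ Fin O.length)) (x : A ⊕ Fin O.length) :
    Sum.inl ⁻¹' ((P.transform O).applyA s x) = P.applyA (Sum.inl ⁻¹' s) (baseAction O x) := by
  ext p
  cases x <;> simp [applyA, transform, baseAction]

theorem transform_applyA_inl (s : Set F) (M : Set (Fin O.length)) (a : A) :
    (P.transform O).applyA (Sum.inl '' s ∪ Sum.inr '' M) (Sum.inl a) =
      Sum.inl '' P.applyA s a ∪ Sum.inr '' M := by
  ext (p | j) <;> simp [applyA, transform]

theorem transform_applyA_inr (s : Set F) (M : Set (Fin O.length)) (j : Fin O.length) :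
    (P.transform O).applyA (Sum.inl '' s ∪ Sum.inr '' M) (Sum.inr j) =
      Sum.inl '' P.applyA s (O.get j) ∪ Sum.inr '' insert j M := by
  ext (p | i) <;> simp [applyA, transform, or_comm]

variable {P O}

theorem Exec.map_baseAction {s t : Set (F ⊕ Fin O.length)} {ρ : List (A ⊕ Fin O.length)}
    (h : (P.transform O).Exec s ρ t) :
    P.Exec (Sum.inl ⁻¹' s) (ρ.map (baseAction O)) (Sum.inl ⁻¹' t) := by
  induction h with
  | nil s => exact .nil _
  | @cons s t x ρ hpre _ ih =>
    refine .cons ?_ (preimage_inl_transform_applyA P O s x ▸ ih)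
    intro p hp
    cases x with
    | inl a => exact hpre ⟨p, hp, rfl⟩
    | inr j => exact hpre (Or.inl ⟨p, hp, rfl⟩)

theorem Exec.map_inl {s t : Set F} {ρ : List A} (h : P.Exec s ρ t) :
    (P.transform O).Exec (Sum.inl '' s) (ρ.map Sum.inl) (Sum.inl '' t) := by
  induction h with
  | nil s => exact .nil _
  | @cons s t a ρ hpre _ ih =>
    refine .cons (Set.image_mono hpre) ?_
    have hstep : (P.transform O).applyA (Sum.inl '' s) (Sum.inl a) = Sum.inl '' P.applyA s a := by
      simpa using transform_applyA_inl P O s ∅ a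
    rwa [hstep]

/-- Each new action `o_{O[i+1]}` in `ρ` is preceded in `ρ` by `o_{O[i]}`, unless `i ∈ M`
(the fluent `p_{O[i]}` is already available). -/
abbrev MarkersOrdered (M : Set (Fin O.length)) (ρ : List (A ⊕ Fin O.length)) : Prop :=
  ∀ (ρ₁ ρ₂ : List (A ⊕ Fin O.length)) (j : Fin O.length), ρ = ρ₁ ++ Sum.inr j :: ρ₂ →
    ∀ i : Fin O.length, (i : ℕ) + 1 = j → i ∈ M ∨ Sum.inr i ∈ ρ₁

theorem MarkersOrdered.of_cons_inl {M : Set (Fin O.length)} {a : A}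
    {ρ : List (A ⊕ Fin O.length)} (h : MarkersOrdered M (Sum.inl a :: ρ)) :
    MarkersOrdered M ρ := fun ρ₁ ρ₂ j hρ i hi => by
  simpa using h (Sum.inl a :: ρ₁) ρ₂ j (by simp [hρ]) i hi

theorem MarkersOrdered.of_cons_inr {M : Set (Fin O.length)} {j : Fin O.length}
    {ρ : List (A ⊕ Fin O.length)} (h : MarkersOrdered M (Sum.inr j :: ρ)) :
    MarkersOrdered (insert j M) ρ := fun ρ₁ ρ₂ j' hρ i hi => by
  simpa [or_left_comm, or_assoc] using h (Sum.inr j :: ρ₁) ρ₂ j' (by simp [hρ]) i hi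

theorem Exec.transform_of_map_baseAction {ρ : List (A ⊕ Fin O.length)} {M : Set (Fin O.length)}
    {s t : Set F} (hρ : MarkersOrdered M ρ) (h : P.Exec s (ρ.map (baseAction O)) t) :
    (P.transform O).Exec (Sum.inl '' s ∪ Sum.inr '' M) ρ
      (Sum.inl '' t ∪ Sum.inr '' (M ∪ {j | Sum.inr j ∈ ρ})) := by
  induction ρ generalizing s M with
  | nil => cases h; simp [Exec.nil]
  | cons x ρ ih =>
    obtain _ | ⟨hpre, htail⟩ := h
    cases x with
    | inl a =>
      refine .cons (fun p ⟨q, hq, hp⟩ => hp ▸ Or.inl ⟨q, hpre hq, rfl⟩) ?_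
      have hmarks : {j | Sum.inr j ∈ Sum.inl a :: ρ} = {j | Sum.inr j ∈ ρ} := by simp
      rw [transform_applyA_inl, hmarks]
      exact ih hρ.of_cons_inl htail
    | inr j =>
      refine .cons (fun p hp => ?_) ?_
      · rcases hp with ⟨q, hq, rfl⟩ | ⟨hj, rfl⟩
        · exact Or.inl ⟨q, hpre hq, rfl⟩
        · refine Or.inr ⟨_, ?_, rfl⟩
          simpa using hρ [] ρ j rfl ⟨(j : ℕ) - 1, by omega⟩ (by simp; omega)
      have hmarks : M ∪ {i | Sum.inr i ∈ Sum.inr j :: ρ} = insert j M ∪ {i | Sum.inr i ∈ ρ} := by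
        ext i
        simp [or_left_comm, or_assoc]
      rw [transform_applyA_inr, hmarks]
      exact ih hρ.of_cons_inr htail

theorem IsPlan.map_baseAction {G : Set F} {ρ : List (A ⊕ Fin O.length)}
    (h : (P.transform O).IsPlan (Sum.inl '' G) ρ) : P.IsPlan G (ρ.map (baseAction O)) := by
  obtain ⟨t, hexec, hGt⟩ := h
  refine ⟨Sum.inl ⁻¹' t, ?_, fun p hp => hGt ⟨p, hp, rfl⟩⟩
  simpa [transform, Set.preimage_image_eq _ Sum.inl_injective] using hexec.map_baseAction

theorem IsPlan.map_inl {G : Set F} {ρ : List A} (h : P.IsPlan G ρ) :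
    (P.transform O).IsPlan (Sum.inl '' G) (ρ.map Sum.inl) :=
  let ⟨t, hexec, hGt⟩ := h
  ⟨Sum.inl '' t, hexec.map_inl, Set.image_mono hGt⟩

end Strips

/-- `π'` arises from `π` by replacing, for each `j`, the action at position `f j` with the new
action `o_{O[j]}` of the transformed domain. -/
def IsMarking {A : Type} {O π : List A} (f : Fin O.length → Fin π.length)
    (π' : List (A ⊕ Fin O.length)) : Prop :=
  ∃ hlen : π'.length = π.length,
    (∀ j, π'.get (Fin.cast hlen.symm (f j)) = Sum.inr j) ∧
    ∀ i, (∀ j, f j ≠ i) → π'.get (Fin.cast hlen.symm i) = Sum.inl (π.get i)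

namespace IsMarking

variable {A : Type} {O π : List A} {f : Fin O.length → Fin π.length}
  {π' : List (A ⊕ Fin O.length)}

theorem getElem_eq_inr (h : IsMarking f π') (j : Fin O.length) :
    π'[(f j : ℕ)]'(h.1.symm ▸ (f j).isLt) = Sum.inr j := by
  simpa using h.2.1 j

theorem inr_mem (h : IsMarking f π') (j : Fin O.length) : Sum.inr j ∈ π' :=
  h.getElem_eq_inr j ▸ List.getElem_mem _

theorem eq_of_getElem_eq_inr (h : IsMarking f π') {i : ℕ} (hi : i < π'.length)
    {j : Fin O.length} (hij : π'[i] = Sum.inr j) : (f j : ℕ) = i := by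
  by_cases hf : ∃ j', f j' = ⟨i, h.1 ▸ hi⟩
  · obtain ⟨j', hj'⟩ := hf
    have hj'i : (f j' : ℕ) = i := by simp [hj']
    have := h.getElem_eq_inr j'
    simp only [hj'i, hij, Sum.inr.injEq] at this
    rwa [this]
  · simp only [not_exists] at hf
    simpa [hij] using h.2.2 _ hf

theorem map_baseAction (h : IsMarking f π') (hsat : ∀ j, π.get (f j) = O.get j) :
    π'.map (baseAction O) = π := by
  obtain ⟨hlen, hin, hout⟩ := h
  refine List.ext_getElem (by simp [hlen]) fun i hi' hi => ?_
  by_cases hf : ∃ j, f j = ⟨i, hi⟩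
  · obtain ⟨j, hj⟩ := hf
    have hinj := hin j
    have hsatj := hsat j
    rw [hj] at hinj hsatj
    simp_all [baseAction]
  · simp only [not_exists] at hf
    simpa [baseAction] using congrArg (baseAction O) (hout _ hf)

theorem markersOrdered (h : IsMarking f π') (hf : StrictMono f) :
    Strips.MarkersOrdered ∅ π' := by
  intro ρ₁ ρ₂ j hρ i hi
  have hfj : (f j : ℕ) = ρ₁.length :=
    h.eq_of_getElem_eq_inr (by simp [hρ]) (by simp [hρ])
  have hlt : (f i : ℕ) < ρ₁.length := hfj ▸ hf (Fin.lt_def.2 (by omega))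
  have := h.getElem_eq_inr i
  simp only [hρ, List.getElem_append_left hlt] at this
  exact Or.inr (this ▸ List.getElem_mem hlt)

end IsMarking

theorem IsMarking.isPlan_goalTransform {F A : Type} {P : Strips F A} {O π : List A}
    {f : Fin O.length → Fin π.length} {π' : List (A ⊕ Fin O.length)} {G : Set F}
    (h : IsMarking f π') (hf : StrictMono f) (hsat : ∀ j, π.get (f j) = O.get j)
    (hplan : P.IsPlan G π) : (P.transform O).IsPlan (goalTransform O G) π' := by
  obtain ⟨t, hexec, hGt⟩ := hplan
  rw [← h.map_baseAction hsat] at hexec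
  have hexec' : (P.transform O).Exec (Sum.inl '' P.I) π'
      (Sum.inl '' t ∪ Sum.inr '' {j | Sum.inr j ∈ π'}) := by
    simpa using hexec.transform_of_map_baseAction (h.markersOrdered hf)
  refine ⟨_, hexec', ?_⟩
  rintro _ (⟨p, hp, rfl⟩ | ⟨j, rfl⟩)
  · exact Or.inl ⟨p, hGt hp, rfl⟩
  · exact Or.inr ⟨j, h.inr_mem j, rfl⟩

theorem optimal_plan_satisfying_obs_iff_transformed_optimal_general
    {F A : Type}
    (P : Strips F A) (O : List A)
    (c : A → ℝ)
    (G : Set F)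
    (π : List A) (f : Fin O.length → Fin π.length)
    (hf : StrictMono f) (hsat : ∀ j, π.get (f j) = O.get j)
    (π' : List (A ⊕ Fin O.length)) (hlen : π'.length = π.length)
    (hin : ∀ j : Fin O.length, π'.get (Fin.cast hlen.symm (f j)) = Sum.inr j)
    (hout : ∀ i : Fin π.length, (∀ j, f j ≠ i) →
      π'.get (Fin.cast hlen.symm i) = Sum.inl (π.get i)) :
    (P.IsOptimalPlan c G π ∧ Strips.Satisfies π O) ↔
      ((P.transform O).IsOptimalPlan (costTransform c O) (Sum.inl '' G) π' ∧
       (P.transform O).IsOptimalPlan (costTransform c O) (goalTransform O G) π') := by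
  have hmark : IsMarking f π' := ⟨hlen, hin, hout⟩
  have hproj := hmark.map_baseAction hsat
  have hcost : Strips.planCost (costTransform c O) π' = Strips.planCost c π := by
    rw [costTransform_eq_comp, Strips.planCost_map, hproj]
  have hG : Sum.inl '' G ⊆ goalTransform O G := Set.subset_union_left
  constructor
  · rintro ⟨⟨hplan, hopt⟩, -⟩
    have hplan' := hmark.isPlan_goalTransform hf hsat hplan
    have hopt' : ∀ ρ, (P.transform O).IsPlan (Sum.inl '' G) ρ →
        Strips.planCost (costTransform c O) π' ≤ Strips.planCost (costTransform c O) ρ := by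
      intro ρ hρ
      rw [hcost, costTransform_eq_comp, Strips.planCost_map]
      exact hopt _ hρ.map_baseAction
    exact ⟨⟨hplan'.mono hG, hopt'⟩, hplan', fun ρ hρ => hopt' ρ (hρ.mono hG)⟩
  · rintro ⟨⟨-, hopt⟩, hplan', -⟩
    refine ⟨⟨hproj ▸ (hplan'.mono hG).map_baseAction, fun ρ hρ => ?_⟩, f, hf, hsat⟩
    calc Strips.planCost c π = Strips.planCost (costTransform c O) π' := hcost.symm
      _ ≤ Strips.planCost (costTransform c O) (ρ.map Sum.inl) := hopt _ hρ.map_inl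
      _ = Strips.planCost c ρ := (Strips.planCost_map _ _ _).symm

/-- let `T = ⟨P, 𝒢, O⟩` be a plan-recognition theory with `O`
pairwise distinct, `P' = P.transform O` the transformed domain with cost
`c(o_a) = c(a)`, and `G ∈ 𝒢`.  Let `π` be an action sequence satisfying `O`
under the strictly monotonic function `f` (hypotheses `hf`, `hsat`), and let
`π'` be the corresponding sequence obtained by replacing `a_{f j}` with
`o_{a_{f j}}` (hypotheses `hin`, `hout`).  Then `π` is an optimal plan for
`G` in `P` that satisfies `O` iff `π'` is simultaneously an optimal plan for
the goal `G` in `P'` and an optimal plan for the goal `G' = G ∪ F_o` in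
`P'`. -/
theorem optimal_plan_satisfying_obs_iff_transformed_optimal
    {F A : Type} [Finite F] [Finite A]
    (P : Strips F A) (𝒢 : Set (Set F)) (O : List A) (hO : O.Nodup)
    (c : A → ℝ) (hc : ∀ a, 0 ≤ c a)
    (G : Set F) (hG : G ∈ 𝒢)
    (π : List A) (f : Fin O.length → Fin π.length)
    (hf : StrictMono f) (hsat : ∀ j, π.get (f j) = O.get j)
    (π' : List (A ⊕ Fin O.length)) (hlen : π'.length = π.length)
    (hin : ∀ j : Fin O.length, π'.get (Fin.cast hlen.symm (f j)) = Sum.inr j)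
    (hout : ∀ i : Fin π.length, (∀ j, f j ≠ i) →
      π'.get (Fin.cast hlen.symm i) = Sum.inl (π.get i)) :
    (P.IsOptimalPlan c G π ∧ Strips.Satisfies π O) ↔
      ((P.transform O).IsOptimalPlan (costTransform c O) (Sum.inl '' G) π' ∧
       (P.transform O).IsOptimalPlan (costTransform c O) (goalTransform O G) π') :=
  optimal_plan_satisfying_obs_iff_transformed_optimal_general P O c G π f hf hsat π' hlen hin hout
end

section
/- Let T = ⟨P, 𝒢, O⟩ be a plan-recognition theory with O pairwise distinct and P' the transformed domain with c(o_a) = c(a). For every goal G ⊆ F, G is solvable in P if and only if G is solvable in P', and in that case c*_P(G) = c*_{P'}(G): the new actions o_a neither enable new plans for G nor change the optimal cost of achieving G. -/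
/-! Every plan of `P` is a plan of `P'` using only the original actions, at the same cost.
Conversely, erasing the fluents `p_a` from the states of a plan of `P'` and replacing each
`o_a` by `a` gives a plan of `P`: the extra precondition of `o_a` only makes it harder to
apply, and its extra effect `p_a` is invisible on `F`. Both translations preserve cost, so
the two sets of plan costs for `G` coincide, and with them their infima. -/

namespace Strips

variable {F A F' A' : Type}

structure IsSimulation (Q : Strips F' A') (P : Strips F A) (σ : Set F' → Set F)
    (h : A' → A) : Prop where
  monotone : Monotone σ
  initial : σ Q.I = P.I
  pre_subset : ∀ s a, Q.pre a ⊆ s → P.pre (h a) ⊆ σ s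
  applyA_eq : ∀ s a, σ (Q.applyA s a) = P.applyA (σ s) (h a)

namespace IsSimulation

variable {Q : Strips F' A'} {P : Strips F A} {σ : Set F' → Set F} {h : A' → A}

theorem exec (hs : IsSimulation Q P σ h) {s t : Set F'} {π : List A'}
    (hπ : Q.Exec s π t) : P.Exec (σ s) (π.map h) (σ t) := by
  induction hπ with
  | nil s => exact .nil _
  | @cons s t a π hpre _ ih =>
    exact .cons (hs.pre_subset s a hpre) (hs.applyA_eq s a ▸ ih)

theorem isPlan (hs : IsSimulation Q P σ h) {G' : Set F'} {G : Set F} (hG : G ⊆ σ G')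
    {π : List A'} (hπ : Q.IsPlan G' π) : P.IsPlan G (π.map h) := by
  obtain ⟨t, hexec, hGt⟩ := hπ
  exact ⟨σ t, hs.initial ▸ hs.exec hexec, hG.trans (hs.monotone hGt)⟩

end IsSimulation

theorem planCost_map_s8 (c : A → ℝ) (h : A' → A) (π : List A') :
    planCost c (π.map h) = planCost (c ∘ h) π := by
  simp only [planCost, List.map_map]

/-- The observed action underlying an action of the transformed domain: `o_a ↦ a`. -/
def baseAction (O : List A) : A ⊕ Fin O.length → A := Sum.elim id O.get

theorem costTransform_eq_comp_baseAction (c : A → ℝ) (O : List A) :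
    costTransform c O = c ∘ baseAction O := by
  ext (a | j) <;> rfl

theorem isSimulation_transform_inl (P : Strips F A) (O : List A) :
    IsSimulation P (P.transform O) (Set.image Sum.inl) Sum.inl where
  monotone _ _ := Set.image_mono
  initial := rfl
  pre_subset _ _ := Set.image_mono
  applyA_eq s a := by
    simp only [applyA, transform, Set.image_union, Set.image_sdiff Sum.inl_injective]

theorem transform_isSimulation_baseAction (P : Strips F A) (O : List A) :
    IsSimulation (P.transform O) P (Set.preimage Sum.inl) (baseAction O) where
  monotone _ _ := Set.preimage_mono
  initial := Set.preimage_image_eq _ Sum.inl_injective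
  pre_subset s a hpre f hf := by
    cases a with
    | inl b => exact hpre ⟨f, hf, rfl⟩
    | inr j => exact hpre (Or.inl ⟨f, hf, rfl⟩)
  applyA_eq s a := by
    ext f
    cases a <;> simp [applyA, transform, baseAction]

theorem image_planCost_transform (P : Strips F A) (O : List A) (c : A → ℝ) (G : Set F) :
    planCost (costTransform c O) ''
        {π' | (P.transform O).IsPlan (Sum.inl '' G) π'} =
      planCost c '' {π | P.IsPlan G π} := by
  ext r
  constructor
  · rintro ⟨π', hπ', rfl⟩
    refine ⟨π'.map (baseAction O), ?_, ?_⟩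
    · exact (transform_isSimulation_baseAction P O).isPlan (Set.subset_preimage_image _ _) hπ'
    · rw [planCost_map_s8, costTransform_eq_comp_baseAction]
  · rintro ⟨π, hπ, rfl⟩
    exact ⟨π.map Sum.inl, (isSimulation_transform_inl P O).isPlan le_rfl hπ,
      planCost_map_s8 _ _ _⟩

end Strips

theorem transform_preserves_solvability_and_cstar_general
    {F A : Type}
    (P : Strips F A) (O : List A)
    (c : A → ℝ) :
    ∀ G : Set F,
      ((∃ π, P.IsPlan G π) ↔
        (∃ π', (P.transform O).IsPlan (Sum.inl '' G) π')) ∧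
      ((∃ π, P.IsPlan G π) →
        P.cstar c G = (P.transform O).cstar (costTransform c O) (Sum.inl '' G)) := by
  intro G
  have hcosts := Strips.image_planCost_transform P O c G
  refine ⟨?_, fun _ => by rw [Strips.cstar, Strips.cstar, hcosts]⟩
  have hsolvable := congrArg Set.Nonempty hcosts
  rw [Set.image_nonempty, Set.image_nonempty] at hsolvable
  exact hsolvable.symm.to_iff

/-- let `T = ⟨P, 𝒢, O⟩` be a plan-recognition theory with `O`
pairwise distinct and `P' = P.transform O` the transformed domain with cost
`c(o_a) = c(a)`.  For every goal `G ⊆ F`, `G` is solvable in `P` iff `G` is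
solvable in `P'`, and in that case `c*_P(G) = c*_{P'}(G)`: the new actions
`o_a` neither enable new plans for `G` nor change the optimal cost of
achieving `G`. -/
theorem transform_preserves_solvability_and_cstar
    {F A : Type} [Finite F] [Finite A]
    (P : Strips F A) (𝒢 : Set (Set F)) (O : List A) (hO : O.Nodup)
    (c : A → ℝ) (hc : ∀ a, 0 ≤ c a) :
    ∀ G : Set F,
      ((∃ π, P.IsPlan G π) ↔
        (∃ π', (P.transform O).IsPlan (Sum.inl '' G) π')) ∧
      ((∃ π, P.IsPlan G π) →
        P.cstar c G = (P.transform O).cstar (costTransform c O) (Sum.inl '' G)) :=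
  transform_preserves_solvability_and_cstar_general P O c
end
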